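/- Let G_• be a filtered group of degree s and k ≥ 2. If F is a face of {0,1}^k of dimension 0 (a single vertex ω_0) and x ∈ G, then [x]_{{ω_0}} ∈ HK^k(G_•) if and only if x ∈ G_k (equivalently, x is the identity when k > s). -/

import Mathlib

open Subgroup

/-- A filtration on a group `G`: a chain `G = G₀ ⊇ G₁ ⊇ ...` of subgroups with
`[Gᵢ, Gⱼ] ⊆ G_{i+j}` for all `i j`. -/
structure IsGroupFiltration {G : Type*} [Group G] (Gf : ℕ → Subgroup G) : Prop where
  top : Gf 0 = ⊤
  mono : ∀ i, Gf (i + 1) ≤ Gf i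
  comm : ∀ i j, ⁅Gf i, Gf j⁆ ≤ Gf (i + j)

/-- The top vertex `(1,…,1)` of the discrete cube `{0,1}^k`. -/
def topVert (k : ℕ) : Fin k → Bool := fun _ => true

/-- The configuration `[x]_{F_S}`: equal to `x` on the upper face `F_S = {ω : ω ⊇ S}`
and the identity elsewhere. -/
def upperFaceConfig {G : Type*} [Group G] {k : ℕ} (S : Finset (Fin k)) (x : G) :
    (Fin k → Bool) → G :=
  fun ω => if ∀ i ∈ S, ω i = true then x else 1

/-- The Host–Kra cube group `HK^k(G_•)`: the subgroup of `G^{{0,1}^k}` generated by the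
configurations `[x]_{F_S}` with `x ∈ G_{|S|}`. -/
def hostKra {G : Type*} [Group G] (Gf : ℕ → Subgroup G) (k : ℕ) :
    Subgroup ((Fin k → Bool) → G) :=
  Subgroup.closure { c | ∃ (S : Finset (Fin k)) (x : G), x ∈ Gf S.card ∧ c = upperFaceConfig S x }

/-!
Restricting a configuration `c` on `{0,1}^(k+1)` to the two faces `ω 0 = false` and
`ω 0 = true` sends `HK^(k+1)(G_•)` into pairs `(c₀, c₀ d)` with `c₀ ∈ HK^k(G_•)` and
`d ∈ HK^k(G_{•+1})`; this uses that `HK^k(G_•)` normalizes `HK^k(G_{•+1})`, which is where the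
commutator condition of the filtration enters. For the configuration `[x]_{ω₀}` one of the two
restrictions is trivial, so `x^{±1}` is a vertex configuration in `HK^k(G_{•+1})`, and induction
on `k` gives `x ∈ G_k`. Conversely, a configuration `x` on a face of codimension `|T|` with
`x ∈ G_{|T|}` is the quotient of two such configurations on faces that are "higher" in one
coordinate, so by induction it is a product of generators `[x]_{F_S}`.
-/

open Finset
open scoped commutatorElement

section

variable {G : Type*} [Group G] {k : ℕ} {Gf : ℕ → Subgroup G}

lemma commutator_succ_le_succ (hanti : Antitone Gf)
    (hcomm : ∀ i j, ⁅Gf i, Gf j⁆ ≤ Gf (i + j)) (i j : ℕ) :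
    ⁅Gf (i + 1), Gf (j + 1)⁆ ≤ Gf (i + j + 1) :=
  (hcomm _ _).trans (hanti (by omega))

def upperFaceConfigHom (S : Finset (Fin k)) : G →* ((Fin k → Bool) → G) where
  toFun := upperFaceConfig S
  map_one' := by funext ω; simp [upperFaceConfig]
  map_mul' x y := by funext ω; simp only [upperFaceConfig, Pi.mul_apply]; split_ifs <;> simp

lemma commutatorElement_upperFaceConfig (S T : Finset (Fin k)) (y z : G) :
    ⁅upperFaceConfig S y, upperFaceConfig T z⁆ = upperFaceConfig (S ∪ T) ⁅y, z⁆ := by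
  funext ω
  simp only [commutatorElement_def, Pi.mul_apply, Pi.inv_apply, upperFaceConfig,
    forall_mem_union]
  split_ifs <;> simp_all

lemma upperFaceConfig_mem_hostKra {S : Finset (Fin k)} {x : G}
    (hx : x ∈ Gf #S) : upperFaceConfig S x ∈ hostKra Gf k :=
  Subgroup.subset_closure ⟨S, x, hx, rfl⟩

lemma apply_mem_of_mem_hostKra (hanti : Antitone Gf) {c : (Fin k → Bool) → G}
    (hc : c ∈ hostKra Gf k) (ω : Fin k → Bool) : c ω ∈ Gf 0 := by
  suffices hostKra Gf k ≤ (Gf 0).comap (Pi.evalMonoidHom _ ω) from this hc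
  refine (Subgroup.closure_le _).mpr ?_
  rintro _ ⟨S, x, hx, rfl⟩
  change upperFaceConfig S x ω ∈ Gf 0
  rw [upperFaceConfig]
  split_ifs
  exacts [hanti (Nat.zero_le _) hx, one_mem _]

lemma upperFaceConfig_conj_mem_hostKra_succ (hanti : Antitone Gf)
    (hcomm : ∀ i j, ⁅Gf i, Gf j⁆ ≤ Gf (i + j)) {S T : Finset (Fin k)} {y z : G}
    (hz : z ∈ Gf #T) (hy : y ∈ Gf (#S + 1)) :
    upperFaceConfig T z * upperFaceConfig S y * (upperFaceConfig T z)⁻¹ ∈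
      hostKra (fun i => Gf (i + 1)) k := by
  have hconj : upperFaceConfig T z * upperFaceConfig S y * (upperFaceConfig T z)⁻¹ =
      ⁅upperFaceConfig T z, upperFaceConfig S y⁆ * upperFaceConfig S y := by group
  rw [hconj, commutatorElement_upperFaceConfig]
  refine mul_mem (upperFaceConfig_mem_hostKra ?_) (upperFaceConfig_mem_hostKra hy)
  have hcard := card_union_le T S
  exact hanti (by omega) (hcomm _ _ (Subgroup.commutator_mem_commutator hz hy))

lemma hostKra_le_normalizer_hostKra_succ (hanti : Antitone Gf)
    (hcomm : ∀ i j, ⁅Gf i, Gf j⁆ ≤ Gf (i + j)) :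
    hostKra Gf k ≤ Subgroup.normalizer (hostKra (fun i => Gf (i + 1)) k : Set _) := by
  refine (Subgroup.closure_le _).mpr ?_
  rintro _ ⟨T, z, hz, rfl⟩
  have hle : (Gf #T).map (upperFaceConfigHom T) ≤
      Subgroup.normalizer (hostKra (fun i => Gf (i + 1)) k : Set _) := by
    refine Subgroup.le_normalizer_closure_iff.mpr ?_
    rintro _ ⟨w, hw, rfl⟩ _ ⟨S, y, hy, rfl⟩
    exact upperFaceConfig_conj_mem_hostKra_succ hanti hcomm hw hy
  exact hle ⟨z, hz, rfl⟩

/-- Restriction to the face `{ω | ω 0 = b}` of `{0,1}^(k+1)`, identified with `{0,1}^k`. -/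
def cubeRestrict (b : Bool) : ((Fin (k + 1) → Bool) → G) →* ((Fin k → Bool) → G) where
  toFun c ω := c (Fin.cons b ω)
  map_one' := rfl
  map_mul' _ _ := rfl

lemma card_filter_succ_mem_add (S : Finset (Fin (k + 1))) :
    #{j : Fin k | j.succ ∈ S} + (if 0 ∈ S then 1 else 0) = #S := by
  simpa [add_comm] using (Fin.card_filter_univ_succ' (· ∈ S)).symm

lemma cubeRestrict_upperFaceConfig {S : Finset (Fin (k + 1))} {b : Bool} (h : 0 ∈ S → b = true)
    (x : G) : cubeRestrict b (upperFaceConfig S x) = upperFaceConfig {j | j.succ ∈ S} x := by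
  funext ω
  refine if_congr ?_ rfl rfl
  simp only [Fin.forall_fin_succ, Fin.cons_zero, Fin.cons_succ, mem_filter, mem_univ, true_and]
  cases b <;> simp_all

lemma cubeRestrict_false_upperFaceConfig {S : Finset (Fin (k + 1))} (h : 0 ∈ S) (x : G) :
    cubeRestrict false (upperFaceConfig S x) = 1 := by
  funext ω
  exact if_neg fun hS => by simpa using hS 0 h

lemma cubeRestrict_mulSingle_cons (b b₀ : Bool) (ω₀ : Fin k → Bool) (x : G) :
    cubeRestrict b (Pi.mulSingle (Fin.cons b₀ ω₀) x) =
      if b = b₀ then Pi.mulSingle ω₀ x else 1 := by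
  funext ω
  simp only [cubeRestrict, MonoidHom.coe_mk, OneHom.coe_mk, Pi.mulSingle_apply, Fin.cons_inj]
  split_ifs <;> simp_all

lemma cubeRestrict_mem_of_mem_hostKra_succ (hanti : Antitone Gf)
    (hcomm : ∀ i j, ⁅Gf i, Gf j⁆ ≤ Gf (i + j)) {c : (Fin (k + 1) → Bool) → G}
    (hc : c ∈ hostKra Gf (k + 1)) :
    cubeRestrict false c ∈ hostKra Gf k ∧
      (cubeRestrict false c)⁻¹ * cubeRestrict true c ∈ hostKra (fun i => Gf (i + 1)) k := by
  have hnorm := hostKra_le_normalizer_hostKra_succ (k := k) hanti hcomm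
  induction hc using Subgroup.closure_induction with
  | mem _ hgen =>
    obtain ⟨S, x, hx, rfl⟩ := hgen
    have hcard := card_filter_succ_mem_add S
    rw [cubeRestrict_upperFaceConfig (fun _ => rfl)]
    by_cases h0 : 0 ∈ S
    · rw [cubeRestrict_false_upperFaceConfig h0, inv_one, one_mul]
      simp only [h0, if_true] at hcard
      exact ⟨one_mem _, upperFaceConfig_mem_hostKra (by rwa [hcard])⟩
    · rw [cubeRestrict_upperFaceConfig (by simp [h0]), inv_mul_cancel]
      simp only [h0, if_false, add_zero] at hcard
      exact ⟨upperFaceConfig_mem_hostKra (by rwa [hcard]), one_mem _⟩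
  | one => simp only [map_one, inv_one, one_mul]; exact ⟨one_mem _, one_mem _⟩
  | mul a b _ _ ha hb =>
    refine ⟨by rw [map_mul]; exact mul_mem ha.1 hb.1, ?_⟩
    have hsplit : (cubeRestrict false (a * b))⁻¹ * cubeRestrict true (a * b) =
        (cubeRestrict false b)⁻¹ * ((cubeRestrict false a)⁻¹ * cubeRestrict true a) *
          (cubeRestrict false b)⁻¹⁻¹ * ((cubeRestrict false b)⁻¹ * cubeRestrict true b) := by
      simp only [map_mul]; group
    rw [hsplit]
    exact mul_mem ((Subgroup.mem_normalizer_iff.mp (hnorm (inv_mem hb.1)) _).mp ha.2) hb.2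
  | inv a _ ha =>
    refine ⟨by rw [map_inv]; exact inv_mem ha.1, ?_⟩
    have hsplit : (cubeRestrict false a⁻¹)⁻¹ * cubeRestrict true a⁻¹ =
        cubeRestrict false a * ((cubeRestrict false a)⁻¹ * cubeRestrict true a)⁻¹ *
          (cubeRestrict false a)⁻¹ := by
      simp only [map_inv]; group
    rw [hsplit]
    exact (Subgroup.mem_normalizer_iff.mp (hnorm ha.1) _).mp (inv_mem ha.2)

lemma mem_of_mulSingle_mem_hostKra (hanti : Antitone Gf)
    (hcomm : ∀ i j, ⁅Gf i, Gf j⁆ ≤ Gf (i + j)) {ω₀ : Fin k → Bool} {x : G}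
    (h : Pi.mulSingle ω₀ x ∈ hostKra Gf k) : x ∈ Gf k := by
  induction k generalizing Gf x with
  | zero => simpa using apply_mem_of_mem_hostKra hanti h ω₀
  | succ k ih =>
    have hanti' : Antitone fun i => Gf (i + 1) := fun i j hij => hanti (by omega)
    obtain ⟨b₀, ω₁, rfl⟩ : ∃ b₀ ω₁, ω₀ = Fin.cons b₀ ω₁ := ⟨_, _, (Fin.cons_self_tail ω₀).symm⟩
    have ih' : ∀ {y : G}, Pi.mulSingle ω₁ y ∈ hostKra (fun i => Gf (i + 1)) k → y ∈ Gf (k + 1) :=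
      fun hy => ih hanti' (commutator_succ_le_succ hanti hcomm) hy
    have hd := (cubeRestrict_mem_of_mem_hostKra_succ hanti hcomm h).2
    simp only [cubeRestrict_mulSingle_cons] at hd
    cases b₀
    · simpa using ih' (by simpa [Pi.mulSingle_inv] using hd)
    · exact ih' (by simpa using hd)

def faceConfig (T : Finset (Fin k)) (ω₀ : Fin k → Bool) (x : G) : (Fin k → Bool) → G :=
  fun ω => if ∀ i ∈ T, ω i = ω₀ i then x else 1

lemma faceConfig_congr {T : Finset (Fin k)} {ω₀ ω₁ : Fin k → Bool} (h : ∀ i ∈ T, ω₀ i = ω₁ i)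
    (x : G) : faceConfig T ω₀ x = faceConfig T ω₁ x := by
  funext ω
  refine if_congr ⟨fun hω i hi => ?_, fun hω i hi => ?_⟩ rfl rfl <;> simp [hω i hi, h i hi]

lemma faceConfig_topVert (T : Finset (Fin k)) (x : G) :
    faceConfig T (topVert k) x = upperFaceConfig T x := rfl

lemma faceConfig_univ (ω₀ : Fin k → Bool) (x : G) :
    faceConfig univ ω₀ x = Pi.mulSingle ω₀ x := by
  funext ω
  simp [faceConfig, Pi.mulSingle_apply, funext_iff]

lemma faceConfig_eq_mul_inv {T : Finset (Fin k)} {ω₀ : Fin k → Bool} {i : Fin k} (hi : i ∈ T)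
    (h0 : ω₀ i = false) (x : G) :
    faceConfig T ω₀ x =
      faceConfig (T.erase i) ω₀ x * (faceConfig T (Function.update ω₀ i true) x)⁻¹ := by
  funext ω
  have hT : ∀ ω₁ : Fin k → Bool, (∀ j ∈ T, ω j = ω₁ j) ↔
      (∀ j ∈ T.erase i, ω j = ω₁ j) ∧ ω i = ω₁ i := fun ω₁ =>
    ⟨fun h => ⟨fun j hj => h j (mem_of_mem_erase hj), h i hi⟩,
      fun h j hj => (eq_or_ne j i).elim (fun hji => hji ▸ h.2) fun hji => h.1 j (by simp [*])⟩
  have hupd : ∀ j ∈ T.erase i, Function.update ω₀ i true j = ω₀ j := fun j hj =>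
    Function.update_of_ne (ne_of_mem_erase hj) _ _
  simp only [faceConfig, Pi.mul_apply, Pi.inv_apply, hT ω₀, hT (Function.update ω₀ i true),
    Function.update_self, h0]
  by_cases hrest : ∀ j ∈ T.erase i, ω j = ω₀ j
  · have hrest' : ∀ j ∈ T.erase i, ω j = Function.update ω₀ i true j := fun j hj =>
      (hrest j hj).trans (hupd j hj).symm
    simp only [eq_true hrest, eq_true hrest', true_and, if_true]
    cases ω i <;> simp
  · have hrest' : ¬ ∀ j ∈ T.erase i, ω j = Function.update ω₀ i true j := fun h =>
      hrest fun j hj => (h j hj).trans (hupd j hj)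
    simp only [eq_false hrest, eq_false hrest', false_and, if_false, inv_one, mul_one]

lemma faceConfig_mem_hostKra (hanti : Antitone Gf)
    (T : Finset (Fin k)) (ω₀ : Fin k → Bool) {x : G} (hx : x ∈ Gf #T) :
    faceConfig T ω₀ x ∈ hostKra Gf k := by
  by_cases hlow : ∃ i ∈ T, ω₀ i = false
  · obtain ⟨i, hi, h0⟩ := hlow
    rw [faceConfig_eq_mul_inv hi h0]
    exact mul_mem (faceConfig_mem_hostKra hanti (T.erase i) ω₀ (hanti card_erase_le hx))
      (inv_mem (faceConfig_mem_hostKra hanti T (Function.update ω₀ i true) hx))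
  · push Not at hlow
    rw [faceConfig_congr (ω₁ := topVert k) (by simpa [topVert] using hlow), faceConfig_topVert]
    exact upperFaceConfig_mem_hostKra hx
termination_by #{i ∈ T | ω₀ i = false}
decreasing_by
  all_goals
    refine card_lt_card ((ssubset_iff_of_subset fun j => ?_).mpr ⟨i, by simp [hi, h0], by simp⟩)
    simp only [mem_filter, mem_erase]
    rcases eq_or_ne j i with rfl | hji <;> simp_all

end

theorem vertex_config_mem_hostKra_iff_general {G : Type*} [Group G] (Gf : ℕ → Subgroup G) (k : ℕ)
    (hf : IsGroupFiltration Gf) (ω₀ : Fin k → Bool) (x : G) :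
    (fun ω => if ω = ω₀ then x else 1) ∈ hostKra Gf k ↔ x ∈ Gf k := by
  have hanti : Antitone Gf := antitone_nat_of_succ_le hf.mono
  have hvertex : (fun ω => if ω = ω₀ then x else 1) = Pi.mulSingle ω₀ x :=
    funext fun ω => (Pi.mulSingle_apply ω₀ x ω).symm
  rw [hvertex]
  refine ⟨mem_of_mulSingle_mem_hostKra hanti hf.comm, fun hx => ?_⟩
  rw [← faceConfig_univ]
  exact faceConfig_mem_hostKra hanti univ ω₀ (by simpa using hx)

/-- For a filtered group of degree `s` and `k ≥ 2`, a configuration supported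
at a single vertex `ω₀` with value `x` lies in `HK^k(G_•)` if and only if `x ∈ G_k`
(equivalently, `x` is the identity when `k > s`). -/
theorem vertex_config_mem_hostKra_iff {G : Type*} [Group G] (Gf : ℕ → Subgroup G) (s k : ℕ)
    (hf : IsGroupFiltration Gf) (hdeg : Gf (s + 1) = ⊥) (hk : 2 ≤ k)
    (ω₀ : Fin k → Bool) (x : G) :
    (fun ω => if ω = ω₀ then x else 1) ∈ hostKra Gf k ↔ x ∈ Gf k :=
  vertex_config_mem_hostKra_iff_general Gf k hf ω₀ x
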